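/- Let N be a nonnegative-integer-valued random variable with cumulant sequence {g_k} and let X be a d-dimensional random vector with cumulant sequence {c_i} (i ∈ ℕ_0^d). Then the i-th cumulant h_i of the random sum S_N = X_1 + ⋯ + X_N of i.i.d. copies of X (independent of N) satisfies h_i = i! ∑_{λ ⊢ i} g_{ℓ(λ)} / (m(λ)! λ!) ∏_j c_{λ_j}^{r_j}, where the sum is over all multi-index partitions λ of i. -/

import Mathlib

open scoped BigOperators

noncomputable section

/-- Multi-indices in `d` variables. -/
abbrev MIdx (d : ℕ) := Fin d →₀ ℕ

/-- `i! = i₁! ⋯ i_d!` for a multi-index. -/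
def mifact {d : ℕ} (i : MIdx d) : ℕ := ∏ k, (i k).factorial

/-- `λ!`: the product of the factorials of all entries of all parts of `λ`. -/
def partFact {d : ℕ} (l : Multiset (MIdx d)) : ℕ := (l.map mifact).prod

/-- `m(λ)! = r₁! r₂! ⋯`: the product of the factorials of the multiplicities of the
distinct parts of `λ`. -/
def multFact {d : ℕ} (l : Multiset (MIdx d)) : ℕ :=
  ∏ x ∈ l.toFinset, (l.count x).factorial

/-- `λ ⊢ i`: a partition of the multi-index `i` is a multiset of nonzero multi-indices
(the columns of the matrix) summing to `i`. -/
def IsMPartition {d : ℕ} (l : Multiset (MIdx d)) (i : MIdx d) : Prop :=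
  (∀ x ∈ l, x ≠ 0) ∧ l.sum = i

/-- The (multivariate) cumulant generating (formal power) series `∑_{i>0} c_i z^i/i!`
of a cumulant sequence `c`. -/
def Kof {d : ℕ} (c : MIdx d → ℝ) : MvPowerSeries (Fin d) ℝ :=
  fun i => if i = 0 then 0 else c i / (mifact i : ℝ)

/-- The total degree `|i|` of a multi-index. -/
def degB {d : ℕ} (i : MIdx d) : ℕ := i.sum fun _ m => m

/-!
Because `K_X` has no constant term, the coefficient of `z^i` in `K_X(z)^k` only involves the
truncation `∑_{0 < e ≤ i} c_e z^e / e!`, and the multinomial theorem expands its `k`-th power as a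
sum over multisets `λ` of `k` nonzero multi-indices with sum `i`, the multiset `λ` being counted
`k!/m(λ)!` times (its number of orderings). Weighting by `g_k/k!` and summing over `k` then runs
over all partitions `λ ⊢ i`, with `k = ℓ(λ)`.
-/

open MvPowerSeries Finset

namespace MvPowerSeries

variable {σ R : Type*} [CommSemiring R]

theorem multiset_prod_map_monomial (m : Multiset (σ →₀ ℕ)) (a : (σ →₀ ℕ) → R) :
    (m.map fun e => monomial e (a e)).prod = monomial m.sum (m.map a).prod := by
  induction m using Multiset.induction with
  | empty => simp
  | cons e m ih => simp [ih, monomial_mul_monomial]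

variable [DecidableEq σ]

theorem coe_trunc'_eq_sum (n : σ →₀ ℕ) (f : MvPowerSeries σ R) :
    (trunc' R n f : MvPowerSeries σ R) = ∑ e ∈ Iic n, monomial e (coeff e f) := by
  ext m
  simp [coeff_trunc', coeff_monomial]

theorem coeff_pow_eq_coeff_trunc'_pow (n : σ →₀ ℕ) (f : MvPowerSeries σ R) (k : ℕ) :
    coeff n (f ^ k) = coeff n ((trunc' R n f : MvPowerSeries σ R) ^ k) := by
  rcases Nat.eq_zero_or_pos k with rfl | hk
  · simp
  · have := congrArg (MvPolynomial.coeff n) (trunc'_trunc'_pow (n := n) hk f)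
    simpa [coeff_trunc'] using this.symm

theorem coeff_pow_eq_sum_sym (n : σ →₀ ℕ) (f : MvPowerSeries σ R) (k : ℕ) :
    coeff n (f ^ k) = ∑ m ∈ (Iic n).sym k with m.toMultiset.sum = n,
      m.toMultiset.countPerms * (m.toMultiset.map (coeff · f)).prod := by
  rw [coeff_pow_eq_coeff_trunc'_pow, coe_trunc'_eq_sum, Finset.sum_pow, map_sum, sum_filter]
  refine sum_congr rfl fun m _ => ?_
  rw [← nsmul_eq_mul, map_nsmul, multiset_prod_map_monomial, coeff_monomial]
  by_cases h : m.toMultiset.sum = n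
  · simp [h, nsmul_eq_mul]
  · simp [h, Ne.symm h]

end MvPowerSeries

section Partitions

variable {d : ℕ}

theorem countPerms_mul_multFact (l : Multiset (MIdx d)) :
    l.countPerms * multFact l = (Multiset.card l).factorial := by
  rw [← Multiset.toFinset_sum_count_eq, mul_comm]
  exact Nat.multinomial_spec l.toFinset l.count

theorem countPerms_eq_factorial_div_multFact {K : Type*} [Field K] [CharZero K]
    (l : Multiset (MIdx d)) :
    (l.countPerms : K) = (Multiset.card l).factorial / multFact l := by
  rw [eq_div_iff (by simp [multFact, Finset.prod_ne_zero_iff, Nat.factorial_ne_zero]),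
    ← Nat.cast_mul, countPerms_mul_multFact]

theorem IsMPartition.card_mem_Icc {l : Multiset (MIdx d)} {i : MIdx d} (hl : IsMPartition l i)
    (hi : i ≠ 0) : Multiset.card l ∈ Icc 1 (degB i) := by
  obtain ⟨hne, rfl⟩ := hl
  refine mem_Icc.2 ⟨Multiset.card_pos.2 (by rintro rfl; exact hi rfl), ?_⟩
  have hdeg : ∀ x ∈ l, 1 ≤ x.degree := fun x hx =>
    Nat.one_le_iff_ne_zero.2 ((Finsupp.degree_eq_zero_iff x).not.2 (hne x hx))
  calc Multiset.card l = Multiset.card (l.map Finsupp.degree) • 1 := by simp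
    _ ≤ (l.map Finsupp.degree).sum := Multiset.card_nsmul_le_sum (by simpa using hdeg)
    _ = degB l.sum := by rw [← map_multiset_sum]; rfl

theorem coeff_pow_eq_sum_partitions {R : Type*} [CommSemiring R] {f : MvPowerSeries (Fin d) R}
    (hf : constantCoeff f = 0) {i : MIdx d} {P : Finset (Multiset (MIdx d))}
    (hP : ∀ l, l ∈ P ↔ IsMPartition l i) (k : ℕ) :
    coeff i (f ^ k) = ∑ l ∈ P with Multiset.card l = k,
      l.countPerms * (l.map (coeff · f)).prod := by
  have parts_ne_zero {l : Multiset (MIdx d)} (hl : (l.map (coeff · f)).prod ≠ 0) :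
      ∀ x ∈ l, x ≠ 0 := by
    rintro x hx rfl
    exact hl (Multiset.prod_eq_zero (Multiset.mem_map.2 ⟨0, hx, hf⟩))
  -- the multisets on both sides agree once those with a zero part, whose terms vanish, are dropped
  rw [coeff_pow_eq_sum_sym]
  refine sum_bij_ne_zero (fun m _ _ => m.toMultiset) ?_ (fun _ _ _ _ _ _ h => Sym.coe_injective h)
    ?_ fun _ _ _ => rfl
  · intro m hm hm0
    rw [mem_filter] at hm ⊢
    exact ⟨(hP _).2 ⟨parts_ne_zero (right_ne_zero_of_mul hm0), hm.2⟩, m.card_coe⟩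
  · intro l hl hl0
    obtain ⟨hlP, rfl⟩ := mem_filter.1 hl
    obtain ⟨-, hsum⟩ := (hP l).1 hlP
    refine ⟨⟨l, rfl⟩, mem_filter.2 ⟨Finset.mem_sym_iff.2 fun x hx => ?_, hsum⟩, hl0, rfl⟩
    exact mem_Iic.2 (hsum ▸ Multiset.le_sum_of_mem hx)

theorem coeff_Kof (c : MIdx d → ℝ) {i : MIdx d} (hi : i ≠ 0) :
    coeff i (Kof c) = c i / mifact i :=
  if_neg hi

theorem constantCoeff_Kof (c : MIdx d → ℝ) : constantCoeff (Kof c) = 0 := by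
  rw [← coeff_zero_eq_constantCoeff_apply]
  exact (if_pos rfl : Kof c 0 = 0)

theorem prod_map_coeff_Kof (c : MIdx d → ℝ) {l : Multiset (MIdx d)} (hl : ∀ x ∈ l, x ≠ 0) :
    (l.map (coeff · (Kof c))).prod = (l.map c).prod / partFact l := by
  rw [Multiset.map_congr rfl fun x hx => coeff_Kof c (hl x hx), Multiset.prod_map_div, partFact,
    Nat.cast_multiset_prod, Multiset.map_map]
  rfl

end Partitions

/-- if `g` is the cumulant sequence of the integer-valued index `N`, `c` the
cumulant sequence of `X`, and `h` the cumulant sequence of the random sum `S_N`, i.e. the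
coefficient sequence of the composition `K_N(K_X(z)) = ∑_{k≥1} g_k K_X(z)^k / k!`, then
`h_i = i! ∑_{λ ⊢ i} g_{ℓ(λ)}/(m(λ)! λ!) ∏_j c_{λ_j}^{r_j}`. -/
theorem cumulants_of_random_sum {d : ℕ} (g : ℕ → ℝ) (c : MIdx d → ℝ)
    (h : MIdx d → ℝ)
    (hh : ∀ i : MIdx d, h i = (mifact i : ℝ) *
      MvPowerSeries.coeff i
        (∑ k ∈ Finset.Icc 1 (degB i), (g k / (k.factorial : ℝ)) • (Kof c) ^ k))
    (i : MIdx d) (hi : i ≠ 0)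
    (P : Finset (Multiset (MIdx d)))
    (hP : ∀ l, l ∈ P ↔ IsMPartition l i) :
    h i = (mifact i : ℝ) * ∑ l ∈ P,
      g (Multiset.card l) / ((multFact l : ℝ) * (partFact l : ℝ)) * ((l.map c).prod) := by
  have term_eq {l : Multiset (MIdx d)} (hl : l ∈ P) :
      g (Multiset.card l) / (Multiset.card l).factorial *
          (l.countPerms * (l.map (coeff · (Kof c))).prod) =
        g (Multiset.card l) / ((multFact l : ℝ) * (partFact l : ℝ)) * (l.map c).prod := by
    rw [countPerms_eq_factorial_div_multFact, prod_map_coeff_Kof c ((hP l).1 hl).1]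
    field_simp
  rw [hh i, map_sum]
  congr 1
  calc ∑ k ∈ Icc 1 (degB i), coeff i ((g k / k.factorial) • Kof c ^ k)
      = ∑ k ∈ Icc 1 (degB i), ∑ l ∈ P with Multiset.card l = k,
          g (Multiset.card l) / ((multFact l : ℝ) * (partFact l : ℝ)) * (l.map c).prod := by
        refine sum_congr rfl fun k _ => ?_
        rw [coeff_smul, coeff_pow_eq_sum_partitions (constantCoeff_Kof c) hP, mul_sum]
        refine sum_congr rfl fun l hl => ?_
        obtain ⟨hlP, rfl⟩ := mem_filter.1 hl
        exact term_eq hlP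
    _ = _ := sum_fiberwise_of_maps_to (fun l hl => ((hP l).1 hl).card_mem_Icc hi) _
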